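/- arXiv:1310.4265 — 3 statements merged into one kernel-verified Lean document; each statement's English description precedes it below -/
import Mathlib

section
/- Let M be the 4×4 matrix with rows (5,5,5,4), (2,1,1,2), (0,1,0,0), (0,0,1,0), and let M̃ be the matrix obtained by dividing the last row by 2 (rows (5,5,5,4), (2,1,1,2), (0,1,0,0), (0,0,1/2,0)). Then the characteristic polynomial of M̃ has a real root strictly between 6.97 and 6.99. -/
open Polynomial

theorem charpoly_Mtilde_eq :
    Matrix.charpoly (!![5, 5, 5, 4; 2, 1, 1, 2; 0, 1, 0, 0; 0, 0, 1/2, 0] :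
        Matrix (Fin 4) (Fin 4) ℚ) = X ^ 4 - 6 * X ^ 3 - 6 * X ^ 2 - 6 * X + 1 := by
  simp [Matrix.charpoly, Matrix.det_succ_row_zero, Fin.sum_univ_succ, Matrix.charmatrix_apply,
    Fin.succAbove, ← C_mul]
  simp only [map_ofNat]
  ring

theorem Polynomial.exists_isRoot_Ioo_of_eval_neg_of_eval_pos {p : ℝ[X]} {a b : ℝ} (hab : a ≤ b)
    (ha : p.eval a < 0) (hb : 0 < p.eval b) : ∃ x ∈ Set.Ioo a b, p.IsRoot x :=
  intermediate_value_Ioo hab p.continuous.continuousOn ⟨ha, hb⟩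

/-- The characteristic polynomial of the matrix `M̃` (Cannon's matrix for `Γ₂` with the
last row divided by `2`) has a real root strictly between `6.97` and `6.99`. -/
theorem stmt_7 :
    ∃ x : ℝ, 6.97 < x ∧ x < 6.99 ∧
      Polynomial.aeval x
        (Matrix.charpoly (!![5, 5, 5, 4; 2, 1, 1, 2; 0, 1, 0, 0; 0, 0, 1/2, 0] :
          Matrix (Fin 4) (Fin 4) ℚ)) = 0 := by
  set p : ℝ[X] := (Matrix.charpoly (!![5, 5, 5, 4; 2, 1, 1, 2; 0, 1, 0, 0; 0, 0, 1/2, 0] :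
    Matrix (Fin 4) (Fin 4) ℚ)).map (algebraMap ℚ ℝ) with hp_def
  have hp : p = X ^ 4 - 6 * X ^ 3 - 6 * X ^ 2 - 6 * X + 1 := by
    rw [hp_def, charpoly_Mtilde_eq]
    simp
  obtain ⟨x, ⟨hlo, hhi⟩, hroot⟩ := p.exists_isRoot_Ioo_of_eval_neg_of_eval_pos
    (a := 6.97) (b := 6.99) (by norm_num) (by rw [hp]; norm_num) (by rw [hp]; norm_num)
  exact ⟨x, hlo, hhi, by rwa [aeval_def, eval₂_eq_eval_map]⟩
end

section
/- The spectral radius of the simple random walk on the free group F_d (d ≥ 2) with 2d generators satisfies ρ ≥ √(2d−1)/d. (Deduced from the identity ⟨Qu_α,u_α⟩ = α(2d−1)/d · ⟨u_α,u_α⟩ valid for all α < 1/√(2d−1), and ρ = ‖Q‖ since Q is self-adjoint.) -/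
/-!
Test `Q` on the truncated radial functions `f_N x = β ^ |x| · 𝟙(|x| ≤ N)` with
`β = (2d - 1)^(-1/2)`. A reduced word of length `k ≥ 1` has one neighbour of length `k - 1` and
`2d - 1` of length `k + 1`, and the sphere of radius `k ≥ 1` has `2d (2d - 1)^(k - 1)` elements.
So every sphere of radius `1 ≤ k ≤ N` carries the same mass `2dβ²` of `f_N²`, whence
`‖f_N‖² = 1 + 2dβ²N`, while `Q f_N = β^(k-1) / d` on the spheres of radius `1 ≤ k < N`, whence
`‖Q f_N‖² ≥ 2(N - 1)/d`. Letting `N → ∞` gives `‖Q‖² ≥ (2d - 1)/d²`.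
-/

open Finset

namespace FreeGroup

variable {α : Type*} [DecidableEq α]

theorem toWord_mk_singleton_mul_of_toWord_eq_cons {x : FreeGroup α} {h : α × Bool}
    {t : List (α × Bool)} (hx : x.toWord = h :: t) (l : α × Bool) :
    (mk [l] * x).toWord = if l = (h.1, !h.2) then t else l :: h :: t := by
  have hred : reduce (h :: t) = h :: t := hx ▸ reduce_toWord x
  rw [← mk_toWord (x := x), mul_mk, toWord_mk, hx, List.singleton_append, reduce.cons, hred]
  simp only [Prod.ext_iff, Bool.eq_not_iff]

theorem norm_mk_singleton_mul_of_toWord_eq_cons {x : FreeGroup α} {h : α × Bool}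
    {t : List (α × Bool)} (hx : x.toWord = h :: t) (l : α × Bool) :
    norm (mk [l] * x) = if l = (h.1, !h.2) then t.length else t.length + 2 := by
  rw [norm, toWord_mk_singleton_mul_of_toWord_eq_cons hx]
  split_ifs <;> rfl

theorem toWord_mk_singleton_mul_of_norm_eq {x : FreeGroup α} {l : α × Bool}
    (hl : norm (mk [l] * x) = norm x + 1) : (mk [l] * x).toWord = l :: x.toWord := by
  rcases hx : x.toWord with _ | ⟨h, t⟩
  · rw [toWord_eq_nil_iff.mp hx, mul_one, toWord_mk, reduce_singleton]
  · rw [toWord_mk_singleton_mul_of_toWord_eq_cons hx, if_neg]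
    intro hinv
    rw [norm_mk_singleton_mul_of_toWord_eq_cons hx, if_pos hinv, norm, hx,
      List.length_cons] at hl
    omega

variable [Fintype α]

theorem sum_comp_norm_mk_singleton_mul {M : Type*} [AddCommMonoid M] (g : ℕ → M)
    {x : FreeGroup α} {k : ℕ} (hx : norm x = k + 1) :
    ∑ l : α × Bool, g (norm (mk [l] * x)) = g k + (2 * Fintype.card α - 1) • g (k + 2) := by
  obtain ⟨h, t, hx'⟩ : ∃ h t, x.toWord = h :: t := List.exists_cons_of_ne_nil
    (by rw [← List.length_pos_iff]; unfold norm at hx; omega)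
  have ht : t.length = k := by simpa [norm, hx'] using hx
  simp only [norm_mk_singleton_mul_of_toWord_eq_cons hx', ht, apply_ite g, sum_ite,
    filter_eq', filter_ne', mem_univ, if_true, sum_const, card_singleton, one_smul,
    card_erase_of_mem (mem_univ _), card_univ, Fintype.card_prod, Fintype.card_bool, mul_comm]

theorem sum_comp_norm_mul_of_add_mul_inv_of {M : Type*} [AddCommMonoid M] (g : ℕ → M)
    {x : FreeGroup α} {k : ℕ} (hx : norm x = k + 1) :
    ∑ a : α, (g (norm (x * of a)) + g (norm (x * (of a)⁻¹))) =
      g k + (2 * Fintype.card α - 1) • g (k + 2) := by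
  rw [← sum_comp_norm_mk_singleton_mul g (x := x⁻¹) (by rwa [norm_inv_eq]),
    Fintype.sum_prod_type]
  refine sum_congr rfl fun a _ => ?_
  have norm_mul_eq (y : FreeGroup α) : norm (x * y) = norm (y⁻¹ * x⁻¹) := by
    rw [← mul_inv_rev, norm_inv_eq]
  rw [Fintype.sum_bool, add_comm, norm_mul_eq, norm_mul_eq, inv_inv]
  rfl

/-- Built by prepending non-cancelling letters, so that its cardinality can be read off;
`mem_sphere` identifies it with `{x | norm x = k}`. -/
def sphere : ℕ → Finset (FreeGroup α)
  | 0 => {1}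
  | k + 1 => {p ∈ sphere k ×ˢ (univ : Finset (α × Bool)) | norm (mk [p.2] * p.1) = k + 1}.image
      fun p => mk [p.2] * p.1

@[simp]
theorem sphere_zero : sphere (α := α) 0 = {1} := rfl

theorem mem_sphere {k : ℕ} {x : FreeGroup α} : x ∈ sphere k ↔ norm x = k := by
  induction k generalizing x with
  | zero => simp [sphere, norm_eq_zero]
  | succ k ih =>
    simp only [sphere, mem_image, mem_filter, mem_product, mem_univ, and_true, ih]
    constructor
    · rintro ⟨⟨y, l⟩, ⟨-, hyl⟩, rfl⟩
      exact hyl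
    · intro hx
      obtain ⟨h, t, hx'⟩ : ∃ h t, x.toWord = h :: t := List.exists_cons_of_ne_nil
        (by rw [← List.length_pos_iff]; unfold norm at hx; omega)
      have ht : reduce t = t :=
        (isReduced_toWord.infix (hx' ▸ List.suffix_cons h t).isInfix).reduce_eq
      have hmk : mk [h] * mk t = x := by rw [mul_mk, List.singleton_append, ← hx', mk_toWord]
      refine ⟨(mk t, h), ⟨?_, hmk ▸ hx⟩, hmk⟩
      simpa [norm, toWord_mk, ht, hx'] using hx

theorem card_sphere_succ_eq_sum (k : ℕ) :
    #(sphere (α := α) (k + 1)) =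
      ∑ y ∈ sphere k, #{l : α × Bool | norm (mk [l] * y) = k + 1} := by
  rw [sphere, card_image_of_injOn, card_filter, sum_product]
  · simp only [card_filter]
  rintro ⟨y, l⟩ hyl ⟨y', l'⟩ hyl' heq
  simp only [coe_filter, mem_product, mem_sphere, mem_univ, and_true, Set.mem_ofPred_eq]
    at hyl hyl'
  have hw := congrArg toWord heq
  simp only [toWord_mk_singleton_mul_of_norm_eq (hyl.1 ▸ hyl.2),
    toWord_mk_singleton_mul_of_norm_eq (hyl'.1 ▸ hyl'.2), List.cons.injEq, toWord_inj] at hw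
  rw [hw.1, hw.2]

theorem card_sphere_succ (k : ℕ) :
    #(sphere (α := α) (k + 1)) = 2 * Fintype.card α * (2 * Fintype.card α - 1) ^ k := by
  induction k with
  | zero =>
    rw [card_sphere_succ_eq_sum, sphere_zero, sum_singleton]
    simp [norm, toWord_mk, mul_comm]
  | succ k ih =>
    have hcount : ∀ y ∈ sphere (α := α) (k + 1),
        #{l : α × Bool | norm (mk [l] * y) = k + 2} = 2 * Fintype.card α - 1 := by
      intro y hy
      rw [card_filter, sum_comp_norm_mk_singleton_mul (fun j => if j = k + 2 then 1 else 0)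
        (mem_sphere.mp hy)]
      simp
    rw [card_sphere_succ_eq_sum, sum_congr rfl hcount, sum_const, ih, smul_eq_mul, pow_succ,
      mul_assoc]

theorem pairwiseDisjoint_sphere (s : Set ℕ) : s.PairwiseDisjoint (sphere (α := α)) :=
  fun _ _ _ _ hkj => disjoint_left.mpr fun _ hk hj => hkj (mem_sphere.mp hk ▸ mem_sphere.mp hj)

end FreeGroup

namespace lp

variable {ι : Type*} {E : ι → Type*} [∀ i, NormedAddCommGroup (E i)]

theorem sum_norm_sq_le_norm_sq (f : lp E 2) (s : Finset ι) : ∑ i ∈ s, ‖f i‖ ^ 2 ≤ ‖f‖ ^ 2 := by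
  simpa using sum_rpow_le_norm_rpow (p := 2) (by norm_num) f s

theorem norm_sq_eq_sum_of_forall_notMem (f : lp E 2) {s : Finset ι} (hf : ∀ i ∉ s, f i = 0) :
    ‖f‖ ^ 2 = ∑ i ∈ s, ‖f i‖ ^ 2 := by
  have h := norm_rpow_eq_tsum (p := 2) (by norm_num) f
  rw [tsum_eq_sum fun i hi => by simp [hf i hi]] at h
  simpa using h

end lp

theorem le_of_forall_nat_mul_le_add_mul {a b c : ℝ} (h : ∀ m : ℕ, m * a ≤ b + m * c) : a ≤ c := by
  by_contra! hlt
  obtain ⟨m, hm⟩ := exists_nat_gt (b / (a - c))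
  rw [div_lt_iff₀ (sub_pos.mpr hlt)] at hm
  linarith [h m]

section RandomWalk

open FreeGroup

variable {α : Type*} [Fintype α] [DecidableEq α]

def ballPow (β : ℝ) (N : ℕ) : lp (fun _ : FreeGroup α => ℝ) 2 :=
  ⟨fun x => if norm x ≤ N then β ^ norm x else 0,
    (memℓp_zero <| ((range (N + 1)).biUnion sphere).finite_toSet.subset fun x hx =>
      mem_biUnion.mpr ⟨norm x, mem_range.mpr (Nat.lt_succ_of_le (of_not_not
        fun h => hx (if_neg h))), mem_sphere.mpr rfl⟩).of_exponent_ge zero_le⟩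

theorem ballPow_apply (β : ℝ) (N : ℕ) (x : FreeGroup α) :
    ballPow β N x = if norm x ≤ N then β ^ norm x else 0 := rfl

def IsSimpleRandomWalk
    (Q : lp (fun _ : FreeGroup α => ℝ) 2 →L[ℝ] lp (fun _ : FreeGroup α => ℝ) 2) : Prop :=
  ∀ f x, Q f x = 1 / (2 * Fintype.card α) * ∑ a : α, (f (x * of a) + f (x * (of a)⁻¹))

variable {Q : lp (fun _ : FreeGroup α => ℝ) 2 →L[ℝ] lp (fun _ : FreeGroup α => ℝ) 2}

section TestVector

variable [Nonempty α] {β : ℝ}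

theorem card_sphere_succ_mul_sq (hβ : (2 * Fintype.card α - 1 : ℝ) * β ^ 2 = 1) (k : ℕ) :
    (#(sphere (α := α) (k + 1)) : ℝ) * (β ^ k) ^ 2 = 2 * Fintype.card α := by
  have hc : 1 ≤ 2 * Fintype.card α := by linarith [Fintype.card_pos (α := α)]
  rw [card_sphere_succ, Nat.cast_mul, Nat.cast_pow, Nat.cast_sub hc, mul_assoc, ← pow_mul,
    mul_comm k, pow_mul, ← mul_pow]
  push_cast
  rw [hβ, one_pow, mul_one]

theorem norm_ballPow_sq (hβ : (2 * Fintype.card α - 1 : ℝ) * β ^ 2 = 1) (N : ℕ) :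
    ‖ballPow (α := α) β N‖ ^ 2 = 1 + N * (2 * Fintype.card α * β ^ 2) := by
  have hsupp : ∀ x : FreeGroup α, x ∉ (range (N + 1)).biUnion sphere → ballPow β N x = 0 :=
      fun x hx => by
    rw [ballPow_apply, if_neg]
    exact fun h => hx (mem_biUnion.mpr ⟨norm x, mem_range.mpr (by omega), mem_sphere.mpr rfl⟩)
  have hsphere : ∀ k ∈ range (N + 1), ∑ x ∈ sphere k, ‖ballPow β N x‖ ^ 2 =
      #(sphere (α := α) k) * (β ^ k) ^ 2 := fun k hk => by
    rw [← nsmul_eq_mul, ← sum_const]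
    refine sum_congr rfl fun x hx => ?_
    rw [ballPow_apply, mem_sphere.mp hx, if_pos (by simp at hk; omega),
      Real.norm_eq_abs, sq_abs]
  rw [lp.norm_sq_eq_sum_of_forall_notMem _ hsupp, sum_biUnion (pairwiseDisjoint_sphere _),
    sum_congr rfl hsphere, sum_range_succ', add_comm]
  have hterm : ∀ k, (#(sphere (α := α) (k + 1)) : ℝ) * (β ^ (k + 1)) ^ 2 =
      2 * Fintype.card α * β ^ 2 := fun k => by
    rw [pow_succ β k, mul_pow, ← mul_assoc, card_sphere_succ_mul_sq hβ]
  simp [hterm]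

theorem IsSimpleRandomWalk.apply_ballPow
    (hQ : IsSimpleRandomWalk Q) (hβ : (2 * Fintype.card α - 1 : ℝ) * β ^ 2 = 1)
    {x : FreeGroup α} {k N : ℕ} (hx : norm x = k + 1) (hkN : k + 2 ≤ N) :
    Q (ballPow β N) x = β ^ k / Fintype.card α := by
  have hc : 1 ≤ 2 * Fintype.card α := by linarith [Fintype.card_pos (α := α)]
  have hsum : ∑ a : α, (ballPow β N (x * of a) + ballPow β N (x * (of a)⁻¹)) =
      β ^ k + (2 * Fintype.card α - 1) • β ^ (k + 2) := by
    simp only [ballPow_apply]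
    simpa only [if_pos (show k ≤ N by omega), if_pos hkN] using
      sum_comp_norm_mul_of_add_mul_inv_of (fun j => if j ≤ N then β ^ j else 0) hx
  have hβk : (2 * Fintype.card α - 1 : ℝ) * β ^ (k + 2) = β ^ k := by
    rw [pow_add, mul_left_comm, hβ, mul_one]
  rw [hQ, hsum, nsmul_eq_mul, Nat.cast_sub hc]
  push_cast
  rw [hβk]
  field_simp
  ring

theorem IsSimpleRandomWalk.le_norm_apply_ballPow_sq
    (hQ : IsSimpleRandomWalk Q) (hβ : (2 * Fintype.card α - 1 : ℝ) * β ^ 2 = 1) (m : ℕ) :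
    m * (2 / Fintype.card α) ≤ ‖Q (ballPow β (m + 1))‖ ^ 2 := by
  have hc : (0 : ℝ) < Fintype.card α := by exact_mod_cast Fintype.card_pos
  have hsphere : ∀ j ∈ Icc 1 m,
      ∑ x ∈ sphere j, ‖Q (ballPow β (m + 1)) x‖ ^ 2 = 2 / Fintype.card α := by
    intro j hj
    obtain ⟨k, rfl⟩ : ∃ k, j = k + 1 := ⟨j - 1, by simp at hj; omega⟩
    calc ∑ x ∈ sphere (k + 1), ‖Q (ballPow β (m + 1)) x‖ ^ 2
        = #(sphere (α := α) (k + 1)) * (β ^ k / Fintype.card α) ^ 2 := by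
          rw [← nsmul_eq_mul, ← sum_const]
          refine sum_congr rfl fun x hx => ?_
          rw [hQ.apply_ballPow hβ (mem_sphere.mp hx) (by simp at hj; omega), Real.norm_eq_abs,
            sq_abs]
      _ = 2 / Fintype.card α := by
          rw [div_pow, ← mul_div_assoc, card_sphere_succ_mul_sq hβ]
          field_simp
  calc m * (2 / Fintype.card α)
      = ∑ x ∈ (Icc 1 m).biUnion sphere, ‖Q (ballPow β (m + 1)) x‖ ^ 2 := by
        rw [sum_biUnion (pairwiseDisjoint_sphere _), sum_congr rfl hsphere, sum_const,
          Nat.card_Icc, nsmul_eq_mul, Nat.add_sub_cancel]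
    _ ≤ ‖Q (ballPow β (m + 1))‖ ^ 2 := lp.sum_norm_sq_le_norm_sq _ _

end TestVector

theorem IsSimpleRandomWalk.sqrt_two_mul_card_sub_one_div_card_le_norm
    (hQ : IsSimpleRandomWalk Q) :
    √(2 * (Fintype.card α : ℝ) - 1) / Fintype.card α ≤ ‖Q‖ := by
  rcases isEmpty_or_nonempty α with _ | _
  · simp
  set c : ℝ := (Fintype.card α : ℝ)
  have hc : 1 ≤ c := Nat.one_le_cast.mpr Fintype.card_pos
  set β : ℝ := (√(2 * c - 1))⁻¹
  have hβ : (2 * c - 1) * β ^ 2 = 1 := by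
    rw [inv_pow, Real.sq_sqrt (by linarith), mul_inv_cancel₀ (by linarith)]
  have hbound : ∀ m : ℕ, m * (2 / c) ≤
      ‖Q‖ ^ 2 * (1 + 2 * c * β ^ 2) + m * (‖Q‖ ^ 2 * (2 * c * β ^ 2)) := fun m =>
    calc m * (2 / c) ≤ ‖Q (ballPow β (m + 1))‖ ^ 2 := hQ.le_norm_apply_ballPow_sq hβ m
      _ ≤ (‖Q‖ * ‖ballPow (α := α) β (m + 1)‖) ^ 2 :=
        pow_le_pow_left₀ (norm_nonneg _) (Q.le_opNorm _) 2
      _ = _ := by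
        rw [mul_pow, norm_ballPow_sq hβ]
        push_cast
        ring
  have hlim := le_of_forall_nat_mul_le_add_mul hbound
  rw [div_le_iff₀ (by linarith), Real.sqrt_le_left (by positivity)]
  calc 2 * c - 1 = (2 * c - 1) * (c / 2) * (2 / c) := by field_simp
    _ ≤ (2 * c - 1) * (c / 2) * (‖Q‖ ^ 2 * (2 * c * β ^ 2)) :=
      mul_le_mul_of_nonneg_left hlim (mul_nonneg (by linarith) (by linarith))
    _ = (‖Q‖ * c) ^ 2 * ((2 * c - 1) * β ^ 2) := by ring
    _ = (‖Q‖ * c) ^ 2 := by rw [hβ, mul_one]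

end RandomWalk

theorem stmt_12_general (d : ℕ)
    (Q : lp (fun _ : FreeGroup (Fin d) => ℝ) 2 →L[ℝ] lp (fun _ : FreeGroup (Fin d) => ℝ) 2)
    (hQ : ∀ (f : lp (fun _ : FreeGroup (Fin d) => ℝ) 2) (x : FreeGroup (Fin d)),
      (Q f : ∀ _ : FreeGroup (Fin d), ℝ) x = (1 / (2 * d)) * ∑ i : Fin d,
        ((f : ∀ _ : FreeGroup (Fin d), ℝ) (x * FreeGroup.of i) +
         (f : ∀ _ : FreeGroup (Fin d), ℝ) (x * (FreeGroup.of i)⁻¹))) :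
    Real.sqrt (2 * d - 1) / d ≤ ‖Q‖ := by
  have hQ' : IsSimpleRandomWalk Q := fun f x => by rw [hQ, Fintype.card_fin]
  simpa using hQ'.sqrt_two_mul_card_sub_one_div_card_le_norm

/-- The spectral radius (norm) of the simple random walk operator on `ℓ²(F_d)` (`d ≥ 2`)
satisfies `ρ = ‖Q‖ ≥ √(2d-1)/d`. -/
theorem stmt_12 (d : ℕ) (hd : 2 ≤ d)
    (Q : lp (fun _ : FreeGroup (Fin d) => ℝ) 2 →L[ℝ] lp (fun _ : FreeGroup (Fin d) => ℝ) 2)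
    (hQ : ∀ (f : lp (fun _ : FreeGroup (Fin d) => ℝ) 2) (x : FreeGroup (Fin d)),
      (Q f : ∀ _ : FreeGroup (Fin d), ℝ) x = (1 / (2 * d)) * ∑ i : Fin d,
        ((f : ∀ _ : FreeGroup (Fin d), ℝ) (x * FreeGroup.of i) +
         (f : ∀ _ : FreeGroup (Fin d), ℝ) (x * (FreeGroup.of i)⁻¹))) :
    Real.sqrt (2 * d - 1) / d ≤ ‖Q‖ :=
  stmt_12_general d Q hQ
end

section
/- Let Γ be a group with finite symmetric generating set S whose Cayley graph has no odd cycles, equipped with a type system (T, t, M): T finite, t : Γ → T, and for all i,j ∈ T, for all but finitely many x with t(x) = j, the number of successors of x of type i equals M_{ij}. Define s_n(i) = #{x : d(e,x) = n, t(x) = i} and p_i = |S| − ∑_j M_{ji} (number of predecessors of a point of type i). Then for all sufficiently large n, p_i · s_{n+1}(i) = ∑_j M_{ij} s_n(j). -/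
open scoped BigOperators

/-- Word length of `x` with respect to a generating set `S`. -/
noncomputable def wordLength {Γ : Type*} [Group Γ] (S : Set Γ) (x : Γ) : ℕ :=
  sInf {n | ∃ l : List Γ, l.length = n ∧ (∀ a ∈ l, a ∈ S) ∧ l.prod = x}

/-!
Count the Cayley-graph edges joining the sphere of radius `n` to the points of type `i` on the
sphere of radius `n + 1` in two ways: from below, a point of type `j` lies on `M i j` of them;
from above, a point of type `i` lies on `p_i` of them. Once `n` exceeds the word lengths of the
finitely many exceptional points, both counts are exact.
-/

open Filter Finset

theorem finite_setOf_wordLength_eq {Γ : Type*} [Group Γ] {S : Set Γ} (hS : S.Finite)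
    {n : ℕ} (hn : n ≠ 0) : {x | wordLength S x = n}.Finite := by
  have : Finite S := hS
  refine ((List.finite_length_eq S n).image fun l => (l.map Subtype.val).prod).subset ?_
  intro x hx
  -- `sInf ∅ = 0`, so a positive word length is attained
  obtain ⟨l, hl, hlS, rfl⟩ : ∃ l : List Γ, l.length = n ∧ (∀ a ∈ l, a ∈ S) ∧ l.prod = x :=
    hx ▸ Nat.sInf_mem (Nat.nonempty_of_pos_sInf (hx.symm ▸ Nat.pos_of_ne_zero hn))
  lift l to List S using hlS
  exact ⟨l, by simpa using hl, rfl⟩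

theorem exists_mem_mul_eq_comm {Γ : Type*} [Group Γ] {S : Set Γ} (hsym : ∀ s ∈ S, s⁻¹ ∈ S)
    {x y : Γ} : (∃ s ∈ S, y = x * s) ↔ ∃ s ∈ S, x = y * s := by
  have key : ∀ x y : Γ, (∃ s ∈ S, y = x * s) → ∃ s ∈ S, x = y * s := by
    rintro x y ⟨s, hs, rfl⟩
    exact ⟨s⁻¹, hsym s hs, by group⟩
  exact ⟨key x y, key y x⟩

theorem eventually_forall_notMem_of_finite {α : Type*} {F : Set α} (hF : F.Finite) (f : α → ℕ) :
    ∀ᶠ n in atTop, ∀ x, f x = n → x ∉ F := by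
  rw [← Nat.cofinite_eq_atTop]
  exact (hF.image f).eventually_cofinite_notMem.mono fun n hn x hx hxF => hn ⟨x, hxF, hx⟩

theorem mul_ncard_eq_sum_mul_ncard_of_double_counting {α T : Type*} [Fintype T]
    {A B : Set α} (hA : A.Finite) (hB : B.Finite) (r : α → α → Prop) (t : α → T)
    (M : T → T → ℕ) (p : ℕ) (i : T)
    (hsucc : ∀ x ∈ A, {y | r x y ∧ y ∈ B ∧ t y = i}.ncard = M i (t x))
    (hpred : ∀ y ∈ B, t y = i → {x | r x y ∧ x ∈ A}.ncard = p) :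
    p * {y ∈ B | t y = i}.ncard = ∑ j, M i j * {x ∈ A | t x = j}.ncard := by
  classical
  lift A to Finset α using hA
  lift B to Finset α using hB
  have hcount : ∀ (C : Finset α) (j : T), {x ∈ (C : Set α) | t x = j}.ncard =
      #{x ∈ C | t x = j} := fun C j => by
    rw [← Set.ncard_coe_finset, coe_filter]; rfl
  have hsucc' : ∀ x ∈ A, #({y ∈ B | t y = i}.bipartiteAbove r x) = M i (t x) := fun x hx => by
    rw [← hsucc x hx, ← Set.ncard_coe_finset, coe_bipartiteAbove]
    congr 1; ext y
    simp only [Set.mem_ofPred_eq, mem_filter, mem_coe]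
    tauto
  have hpred' : ∀ y ∈ {y ∈ B | t y = i}, #(A.bipartiteBelow r y) = p := fun y hy => by
    rw [mem_filter] at hy
    rw [← hpred y hy.1 hy.2, ← Set.ncard_coe_finset, coe_bipartiteBelow]
    congr 1; ext x
    exact and_comm
  simp only [hcount]
  calc p * #{y ∈ B | t y = i}
      = ∑ y ∈ B with t y = i, #(A.bipartiteBelow r y) := by
        rw [sum_congr rfl hpred', sum_const, smul_eq_mul, mul_comm]
    _ = ∑ x ∈ A, #({y ∈ B | t y = i}.bipartiteAbove r x) :=
        (sum_card_bipartiteAbove_eq_sum_card_bipartiteBelow r).symm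
    _ = ∑ x ∈ A, M i (t x) := sum_congr rfl hsucc'
    _ = ∑ j, M i j * #{x ∈ A | t x = j} := by
        simp_rw [← sum_fiberwise' A t (M i), sum_const, smul_eq_mul, mul_comm]

theorem stmt_17_general {Γ : Type*} [Group Γ] (S : Finset Γ)
    (T : Type*) [Fintype T] (t : Γ → T) (M : T → T → ℕ)
    (hsym : ∀ s ∈ S, s⁻¹ ∈ S)
    -- type system: all but finitely many `x` of type `j` have `M i j` successors of type `i`
    (htype : ∀ i j : T, {x : Γ | t x = j ∧
        Set.ncard {y : Γ | (∃ s ∈ S, y = x * s) ∧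
          wordLength (S : Set Γ) y = wordLength (S : Set Γ) x + 1 ∧ t y = i} ≠ M i j}.Finite)
    -- all but finitely many points of type `i` have `p_i = |S| - ∑_j M_{ji}` predecessors
    (hpred : ∀ i : T, {x : Γ | t x = i ∧
        Set.ncard {y : Γ | (∃ s ∈ S, y = x * s) ∧
          wordLength (S : Set Γ) x = wordLength (S : Set Γ) y + 1} ≠
            S.card - ∑ j, M j i}.Finite) :
    ∃ N : ℕ, ∀ n : ℕ, N ≤ n → ∀ i : T,
      (S.card - ∑ j, M j i) *
          Set.ncard {x : Γ | wordLength (S : Set Γ) x = n + 1 ∧ t x = i} =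
        ∑ j, M i j * Set.ncard {x : Γ | wordLength (S : Set Γ) x = n ∧ t x = j} := by
  have hsucc_eventually : ∀ᶠ n in atTop, ∀ i j x, wordLength (S : Set Γ) x = n → t x = j →
      Set.ncard {y : Γ | (∃ s ∈ S, y = x * s) ∧
        wordLength (S : Set Γ) y = wordLength (S : Set Γ) x + 1 ∧ t y = i} = M i j :=
    eventually_all.2 fun i => eventually_all.2 fun j =>
      (eventually_forall_notMem_of_finite (htype i j) _).mono fun _ h x hx hxj =>
        not_not.1 fun hne => h x hx ⟨hxj, hne⟩
  have hpred_eventually : ∀ᶠ n in atTop, ∀ i y, wordLength (S : Set Γ) y = n → t y = i →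
      Set.ncard {x : Γ | (∃ s ∈ S, x = y * s) ∧
        wordLength (S : Set Γ) y = wordLength (S : Set Γ) x + 1} = S.card - ∑ j, M j i :=
    eventually_all.2 fun i =>
      (eventually_forall_notMem_of_finite (hpred i) _).mono fun _ h y hy hyi =>
        not_not.1 fun hne => h y hy ⟨hyi, hne⟩
  obtain ⟨N, hN⟩ := eventually_atTop.1 <| (hsucc_eventually.and
    ((tendsto_add_atTop_nat 1).eventually hpred_eventually)).and (eventually_ne_atTop 0)
  refine ⟨N, fun n hn i => ?_⟩
  obtain ⟨⟨hsucc_n, hpred_n⟩, hn0⟩ := hN n hn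
  refine mul_ncard_eq_sum_mul_ncard_of_double_counting
    (finite_setOf_wordLength_eq S.finite_toSet hn0)
    (finite_setOf_wordLength_eq S.finite_toSet n.add_one_ne_zero)
    (fun x y => ∃ s ∈ S, y = x * s) t M _ i (fun x hx => ?_) (fun y hy hyi => ?_)
  · rw [← hsucc_n i (t x) x hx rfl, hx]; rfl
  · rw [← hpred_n i y hy hyi, hy]
    congr 1; ext x
    exact and_congr (exists_mem_mul_eq_comm hsym) (eq_comm.trans Nat.add_right_cancel_iff.symm)

/-- For a group `Γ` with finite symmetric generating set `S`, whose Cayley graph has no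
odd cycles, equipped with a type system `(T, t, M)`: writing
`s_n(i) = #{x : ℓ(x) = n, t(x) = i}` and `p_i = |S| - ∑_j M_{ji}`, for all sufficiently
large `n` one has `p_i · s_{n+1}(i) = ∑_j M_{ij} s_n(j)`. -/
theorem stmt_17 {Γ : Type*} [Group Γ] (S : Finset Γ)
    (T : Type*) [Fintype T] (t : Γ → T) (M : T → T → ℕ)
    (hsym : ∀ s ∈ S, s⁻¹ ∈ S)
    (hgen : Subgroup.closure (S : Set Γ) = ⊤)
    -- no odd cycles: every edge of the Cayley graph changes the distance to `e` by one
    (hbip : ∀ (x : Γ), ∀ s ∈ S,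
      wordLength (S : Set Γ) (x * s) = wordLength (S : Set Γ) x + 1 ∨
      wordLength (S : Set Γ) x = wordLength (S : Set Γ) (x * s) + 1)
    -- type system: all but finitely many `x` of type `j` have `M i j` successors of type `i`
    (htype : ∀ i j : T, {x : Γ | t x = j ∧
        Set.ncard {y : Γ | (∃ s ∈ S, y = x * s) ∧
          wordLength (S : Set Γ) y = wordLength (S : Set Γ) x + 1 ∧ t y = i} ≠ M i j}.Finite)
    -- all but finitely many points of type `i` have `p_i = |S| - ∑_j M_{ji}` predecessors
    (hpred : ∀ i : T, {x : Γ | t x = i ∧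
        Set.ncard {y : Γ | (∃ s ∈ S, y = x * s) ∧
          wordLength (S : Set Γ) x = wordLength (S : Set Γ) y + 1} ≠
            S.card - ∑ j, M j i}.Finite) :
    ∃ N : ℕ, ∀ n : ℕ, N ≤ n → ∀ i : T,
      (S.card - ∑ j, M j i) *
          Set.ncard {x : Γ | wordLength (S : Set Γ) x = n + 1 ∧ t x = i} =
        ∑ j, M i j * Set.ncard {x : Γ | wordLength (S : Set Γ) x = n ∧ t x = j} :=
  stmt_17_general S T t M hsym htype hpred
end
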